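/- Let $f : [2, \infty) \to \mathbb{R}_{>0}$ be an increasing function such that $p \mapsto f(1/p)$ is log-convex (i.e., $t \mapsto \log f(1/t)$ is convex on $(0, 1/2]$), and suppose there exist positive reals $K, M, \sigma$ such that $f(p) \le K \Psi_p(M, \sigma^2)$ for all even integers $p \ge 2$, where $\Psi_p(M, \sigma^2) = M \sup\{(p/s)(\sigma^2/(pM^2))^{1/s} : 2 \le s \le p\}$. Then $f(p) \le 2K \Psi_p(M, \sigma^2)$ for all real $p \ge 2$. -/

import Mathlib

/-!
Put `θ = 2q/p - 1`, so that `1/p = θ/q + (1 - θ)/(2q)`. Log-convexity of `t ↦ f (1/t)` gives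
`log f p ≤ θ log f q + (1 - θ) log f (2q)`, so it suffices to prove the same interpolation for
`log Ψ` with a loss of `log 2`. Let `y = σ²/(qM²)`. If `log y ≥ -q`, then `Ψ_{2q} ≤ 2 Ψ_q ≤ 2 Ψ_p`.
Otherwise the supremum defining `Ψ_r` is attained at `s = r` for `r = q`, and up to a factor `√2`
for `r = 2q`, so `Ψ_q^θ Ψ_{2q}^{1-θ} ≤ √2 M y^{θ/q + (1-θ)/(2q)} = √2 M y^{1/p}`, which is at most
`2 Ψ_p` because `Ψ_p ≥ M (σ²/(pM²))^{1/p} ≥ M (y/2)^{1/p}`.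
-/

noncomputable def Psi (p M V : ℝ) : ℝ :=
  M * sSup {y : ℝ | ∃ s : ℝ, 2 ≤ s ∧ s ≤ p ∧ y = p / s * (V / (p * M ^ 2)) ^ (1 / s)}

open Real Set

lemma rpow_le_one_add {y e : ℝ} (hy : 0 ≤ y) (he₀ : 0 ≤ e) (he₁ : e ≤ 1) : y ^ e ≤ 1 + y := by
  have h := geom_mean_le_arith_mean2_weighted he₀ (sub_nonneg.2 he₁) hy zero_le_one
    (add_sub_cancel e 1)
  rw [one_rpow, mul_one, mul_one] at h
  nlinarith

lemma log_mul_rpow_one_div {a y r : ℝ} (ha : 0 < a) (hy : 0 < y) :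
    log (a * y ^ (1 / r)) = log a + log y / r := by
  rw [log_mul ha.ne' (rpow_pos_of_pos hy _).ne', log_rpow hy]
  ring

/-- `s ↦ log (q / s) + log y / s` increases up to `s = -log y` and decreases after it; the
hypothesis says that `q` lies between `s` and `-log y`. -/
lemma div_mul_rpow_le_rpow {q s y : ℝ} (hq : 0 < q) (hs : 0 < s) (hy : 0 < y)
    (h : (q - s) * (log y + q) ≤ 0) : q / s * y ^ (1 / s) ≤ y ^ (1 / q) := by
  rw [← log_le_log_iff (by positivity) (by positivity), log_mul (by positivity) (by positivity),
    log_rpow hy, log_rpow hy, log_div hq.ne' hs.ne']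
  have hlog : log (q / s) ≤ q / s - 1 := log_le_sub_one_of_pos (by positivity)
  rw [log_div hq.ne' hs.ne'] at hlog
  have hkey : q / s - 1 + 1 / s * log y - 1 / q * log y = (q - s) * (log y + q) / (q * s) := by
    field_simp; ring
  have : (q - s) * (log y + q) / (q * s) ≤ 0 := div_nonpos_of_nonpos_of_nonneg h (by positivity)
  linarith

lemma div_mul_rpow_le_sqrt_two_mul_rpow {r s y : ℝ} (hs : 0 < s) (hsr : s ≤ r) (hy : 0 < y)
    (h : log y ≤ -(r / 2)) : r / s * y ^ (1 / s) ≤ √2 * y ^ (1 / r) := by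
  have hr : 0 < r := hs.trans_le hsr
  rw [← log_le_log_iff (by positivity) (by positivity), log_mul (by positivity) (by positivity),
    log_mul (by positivity) (by positivity), log_rpow hy, log_rpow hy, log_sqrt zero_le_two]
  have hlog : log (r / s / 2) ≤ r / s / 2 - 1 := log_le_sub_one_of_pos (by positivity)
  rw [log_div (by positivity) two_ne_zero] at hlog
  have hlog2 : log 2 < 1 := by linarith [log_two_lt_d9]
  have hcoef : 0 ≤ 1 / s - 1 / r := sub_nonneg.2 (one_div_le_one_div_of_le hs hsr)
  have hmul := mul_le_mul_of_nonneg_right h hcoef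
  have hrs : -(r / 2) * (1 / s - 1 / r) = -(r / s - 1) / 2 := by field_simp
  linarith

lemma mul_div_rpow_le {a e q p : ℝ} (ha : 0 ≤ a) (hq : 0 < q) (hqp : q ≤ p) (he : e ≤ 1) :
    q * (a / q) ^ e ≤ p * (a / p) ^ e := by
  have hp : 0 < p := hq.trans_le hqp
  have hsplit : ∀ x, 0 < x → x * (a / x) ^ e = a ^ e * x ^ (1 - e) := fun x hx => by
    rw [div_rpow ha hx.le, rpow_sub hx, rpow_one]; ring
  rw [hsplit q hq, hsplit p hp]
  gcongr

section Psi

variable {M V : ℝ}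

lemma le_Psi (hM : 0 ≤ M) (hV : 0 ≤ V) {r s : ℝ} (hs : 2 ≤ s) (hsr : s ≤ r) :
    M * (r / s * (V / (r * M ^ 2)) ^ (1 / s)) ≤ Psi r M V := by
  have hr : 0 < r := by linarith
  refine mul_le_mul_of_nonneg_left (le_csSup ⟨r / 2 * (1 + V / (r * M ^ 2)), ?_⟩
    ⟨s, hs, hsr, rfl⟩) hM
  rintro _ ⟨t, ht, -, rfl⟩
  have ht₀ : 0 < t := by linarith
  exact mul_le_mul (div_le_div_of_nonneg_left hr.le two_pos ht)
    (rpow_le_one_add (by positivity) (by positivity) ((div_le_one ht₀).2 (by linarith)))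
    (by positivity) (by positivity)

lemma Psi_le (hM : 0 < M) {r C : ℝ} (hr : 2 ≤ r)
    (h : ∀ s, 2 ≤ s → s ≤ r → M * (r / s * (V / (r * M ^ 2)) ^ (1 / s)) ≤ C) :
    Psi r M V ≤ C := by
  rw [Psi, ← le_div_iff₀' hM]
  refine csSup_le ⟨_, 2, le_rfl, hr, rfl⟩ ?_
  rintro _ ⟨s, hs, hsr, rfl⟩
  rw [le_div_iff₀' hM]
  exact h s hs hsr

lemma Psi_pos (hM : 0 < M) (hV : 0 < V) {r : ℝ} (hr : 2 ≤ r) : 0 < Psi r M V := by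
  have : 0 < r := by linarith
  exact lt_of_lt_of_le (by positivity) (le_Psi hM.le hV.le le_rfl hr)

lemma mul_rpow_le_Psi (hM : 0 ≤ M) (hV : 0 ≤ V) {r : ℝ} (hr : 2 ≤ r) :
    M * (V / (r * M ^ 2)) ^ (1 / r) ≤ Psi r M V := by
  simpa [div_self (by linarith : r ≠ 0)] using le_Psi hM hV hr le_rfl

lemma Psi_mono (hM : 0 < M) (hV : 0 < V) {q p : ℝ} (hq : 2 ≤ q) (hqp : q ≤ p) :
    Psi q M V ≤ Psi p M V := by
  refine Psi_le hM hq fun s hs hsq => le_trans ?_ (le_Psi hM.le hV.le hs (hsq.trans hqp))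
  have hs₀ : 0 < s := by linarith
  simp only [div_mul_eq_div_div_swap V _ (M ^ 2), div_mul_eq_mul_div _ s]
  have hterm := mul_div_rpow_le (a := V / M ^ 2) (e := 1 / s) (by positivity) (by linarith) hqp
    ((div_le_one hs₀).2 (by linarith))
  gcongr

lemma Psi_two_mul_le (hM : 0 < M) (hV : 0 < V) {q : ℝ} (hq : 2 ≤ q)
    (h : -q ≤ log (V / (q * M ^ 2))) : Psi (2 * q) M V ≤ 2 * Psi q M V := by
  refine Psi_le hM (by linarith) fun s hs hs2q => ?_
  set y := V / (q * M ^ 2)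
  have hq₀ : 0 < q := by linarith
  have hs₀ : 0 < s := by linarith
  have hy : 0 < y := by positivity
  have hhalf : V / (2 * q * M ^ 2) ≤ y :=
    div_le_div_of_nonneg_left hV.le (by positivity) (by gcongr; linarith)
  obtain ⟨t, ht, htq, hst⟩ : ∃ t, 2 ≤ t ∧ t ≤ q ∧ q / s * y ^ (1 / s) ≤ q / t * y ^ (1 / t) := by
    rcases le_total s q with hsq | hqs
    · exact ⟨s, hs, hsq, le_rfl⟩
    · refine ⟨q, hq, le_rfl, ?_⟩
      rw [div_self hq₀.ne', one_mul]
      exact div_mul_rpow_le_rpow hq₀ hs₀ hy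
        (mul_nonpos_of_nonpos_of_nonneg (by linarith) (by linarith))
  calc M * (2 * q / s * (V / (2 * q * M ^ 2)) ^ (1 / s))
      ≤ M * (2 * (q / s * y ^ (1 / s))) := by
        rw [mul_div_assoc, mul_assoc]
        gcongr
    _ ≤ 2 * (M * (q / t * y ^ (1 / t))) := by rw [mul_left_comm]; gcongr
    _ ≤ 2 * Psi q M V := by gcongr; exact le_Psi hM.le hV.le ht htq

lemma Psi_le_rpow_of_log_le (hM : 0 < M) (hV : 0 < V) {r : ℝ} (hr : 2 ≤ r)
    (h : log (V / (r * M ^ 2)) ≤ -r) : Psi r M V ≤ M * (V / (r * M ^ 2)) ^ (1 / r) := by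
  refine Psi_le hM hr fun s hs hsr => ?_
  gcongr
  exact div_mul_rpow_le_rpow (by linarith) (by linarith) (by positivity)
    (mul_nonpos_of_nonneg_of_nonpos (by linarith) (by linarith))

lemma Psi_le_sqrt_two_mul_rpow_of_log_le (hM : 0 < M) (hV : 0 < V) {r : ℝ} (hr : 2 ≤ r)
    (h : log (V / (r * M ^ 2)) ≤ -(r / 2)) :
    Psi r M V ≤ √2 * (M * (V / (r * M ^ 2)) ^ (1 / r)) := by
  refine Psi_le hM hr fun s hs hsr => ?_
  rw [mul_left_comm √2]
  exact mul_le_mul_of_nonneg_left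
    (div_mul_rpow_le_sqrt_two_mul_rpow (by linarith) hsr (by positivity) h) hM.le

end Psi

lemma interpolation_weights {p q : ℝ} (hq : 0 < q) (hqp : q ≤ p) (hpq : p ≤ 2 * q) :
    0 ≤ 2 * q / p - 1 ∧ 0 ≤ 2 - 2 * q / p ∧
      (2 * q / p - 1) / q + (2 - 2 * q / p) / (2 * q) = 1 / p := by
  have hp : 0 < p := hq.trans_le hqp
  refine ⟨?_, ?_, by field_simp; ring⟩
  · rw [sub_nonneg, le_div_iff₀ hp]; linarith
  · rw [sub_nonneg, div_le_iff₀ hp]; linarith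

lemma log_Psi_le_interpolation_of_le_log {M V : ℝ} (hM : 0 < M) (hV : 0 < V) {p q : ℝ}
    (hq : 2 ≤ q) (hqp : q ≤ p) (hpq : p ≤ 2 * q) (h : -q ≤ log (V / (q * M ^ 2))) :
    (2 * q / p - 1) * log (Psi q M V) + (2 - 2 * q / p) * log (Psi (2 * q) M V)
      ≤ log 2 + log (Psi p M V) := by
  obtain ⟨hθ₀, hθ₁, -⟩ := interpolation_weights (by linarith) hqp hpq
  have hΨq := Psi_pos hM hV hq
  have h2q : log (Psi (2 * q) M V) ≤ log 2 + log (Psi q M V) := by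
    rw [← log_mul two_ne_zero hΨq.ne']
    exact log_le_log (Psi_pos hM hV (by linarith)) (Psi_two_mul_le hM hV hq h)
  have hqp' : log (Psi q M V) ≤ log (Psi p M V) := log_le_log hΨq (Psi_mono hM hV hq hqp)
  linarith [mul_le_mul_of_nonneg_left h2q hθ₁, mul_nonneg hθ₀ (log_pos one_lt_two).le]

lemma log_Psi_le_interpolation_of_log_le {M V : ℝ} (hM : 0 < M) (hV : 0 < V) {p q : ℝ}
    (hq : 2 ≤ q) (hqp : q ≤ p) (hpq : p ≤ 2 * q) (h : log (V / (q * M ^ 2)) ≤ -q) :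
    (2 * q / p - 1) * log (Psi q M V) + (2 - 2 * q / p) * log (Psi (2 * q) M V)
      ≤ log 2 + log (Psi p M V) := by
  have hp : 2 ≤ p := hq.trans hqp
  obtain ⟨hθ₀, hθ₁, hθ⟩ := interpolation_weights (by linarith) hqp hpq
  set θ := 2 * q / p - 1
  rw [show 2 - 2 * q / p = 1 - θ by ring] at hθ₁ hθ ⊢
  have hy2q : V / (2 * q * M ^ 2) = V / (q * M ^ 2) / 2 := by rw [div_div]; ring_nf
  set y := V / (q * M ^ 2)
  have hy : 0 < y := by positivity
  have hlog2q : log (V / (2 * q * M ^ 2)) = log y - log 2 := by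
    rw [hy2q, log_div hy.ne' two_ne_zero]
  have hq' : log (Psi q M V) ≤ log M + log y / q :=
    (log_le_log (Psi_pos hM hV hq) (Psi_le_rpow_of_log_le hM hV hq h)).trans_eq
      (log_mul_rpow_one_div hM hy)
  have h2q' : log (Psi (2 * q) M V) ≤ log 2 / 2 + (log M + (log y - log 2) / (2 * q)) := by
    have hle := Psi_le_sqrt_two_mul_rpow_of_log_le hM hV (by linarith : 2 ≤ 2 * q)
      (by rw [hlog2q]; linarith [log_pos one_lt_two])
    refine (log_le_log (Psi_pos hM hV (by linarith)) hle).trans_eq ?_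
    rw [log_mul (by positivity) (by positivity), log_sqrt zero_le_two,
      log_mul_rpow_one_div hM (by positivity), hlog2q]
  have hp' : log M + (log y - log 2) / p ≤ log (Psi p M V) := by
    have hyp : y / 2 ≤ V / (p * M ^ 2) := by
      rw [← hy2q]
      exact div_le_div_of_nonneg_left hV.le (by positivity) (by gcongr)
    calc log M + (log y - log 2) / p = log (M * (y / 2) ^ (1 / p)) := by
          rw [log_mul_rpow_one_div hM (by positivity), log_div hy.ne' two_ne_zero]
      _ ≤ log (Psi p M V) :=
          log_le_log (by positivity) ((by gcongr : _ ≤ _).trans (mul_rpow_le_Psi hM.le hV.le hp))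
  have hweights : θ * (log y / q) + (1 - θ) * ((log y - log 2) / (2 * q))
      = log y / p - (1 - θ) * (log 2 / (2 * q)) := by
    linear_combination (log y) * hθ
  have hlog2 := log_pos one_lt_two
  have hlog2p : log 2 / p ≤ log 2 / 2 := div_le_div_of_nonneg_left hlog2.le two_pos hp
  rw [sub_div] at hp'
  linarith [mul_le_mul_of_nonneg_left hq' hθ₀, mul_le_mul_of_nonneg_left h2q' hθ₁,
    mul_nonneg hθ₀ hlog2.le, mul_nonneg hθ₁ (by positivity : 0 ≤ log 2 / (2 * q))]

lemma log_Psi_le_interpolation {M V : ℝ} (hM : 0 < M) (hV : 0 < V) {p q : ℝ} (hq : 2 ≤ q)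
    (hqp : q ≤ p) (hpq : p ≤ 2 * q) :
    (2 * q / p - 1) * log (Psi q M V) + (2 - 2 * q / p) * log (Psi (2 * q) M V)
      ≤ log 2 + log (Psi p M V) := by
  rcases le_total (-q) (log (V / (q * M ^ 2))) with h | h
  · exact log_Psi_le_interpolation_of_le_log hM hV hq hqp hpq h
  · exact log_Psi_le_interpolation_of_log_le hM hV hq hqp hpq h

lemma log_le_interpolation_of_convexOn {f : ℝ → ℝ}
    (hconv : ConvexOn ℝ (Ioc 0 (1 / 2)) (fun t => log (f t⁻¹))) {p q : ℝ} (hq : 2 ≤ q)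
    (hqp : q ≤ p) (hpq : p ≤ 2 * q) :
    log (f p) ≤ (2 * q / p - 1) * log (f q) + (2 - 2 * q / p) * log (f (2 * q)) := by
  have hq₀ : 0 < q := by linarith
  obtain ⟨hθ₀, hθ₁, hθ⟩ := interpolation_weights hq₀ hqp hpq
  have hmem : ∀ r, 2 ≤ r → r⁻¹ ∈ Ioc (0 : ℝ) (1 / 2) := fun r hr =>
    ⟨by positivity, by rw [one_div]; exact inv_anti₀ two_pos hr⟩
  have h := hconv.2 (hmem q hq) (hmem (2 * q) (by linarith)) hθ₀ hθ₁ (by ring)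
  simp only [smul_eq_mul, ← div_eq_mul_inv, hθ, one_div, inv_inv] at h
  exact h

lemma exists_even_le_le_two_mul {p : ℝ} (hp : 2 ≤ p) :
    ∃ q : ℕ, Even q ∧ 2 ≤ q ∧ (q : ℝ) ≤ p ∧ p ≤ 2 * q := by
  have hn : 1 ≤ ⌊p / 2⌋₊ := Nat.le_floor (by push_cast; linarith)
  have hn' : (1 : ℝ) ≤ ⌊p / 2⌋₊ := by exact_mod_cast hn
  refine ⟨2 * ⌊p / 2⌋₊, even_two_mul _, by omega, ?_, ?_⟩ <;> push_cast
  · linarith [Nat.floor_le (by linarith : 0 ≤ p / 2)]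
  · linarith [Nat.lt_floor_add_one (p / 2)]

theorem psi_integers_to_reals_general (f : ℝ → ℝ)
    (hpos : ∀ p : ℝ, 2 ≤ p → 0 < f p)
    (hconv : ConvexOn ℝ (Set.Ioc (0 : ℝ) (1 / 2)) (fun t => Real.log (f t⁻¹)))
    (K M σ : ℝ) (hK : 0 < K) (hM : 0 < M) (hσ : 0 < σ)
    (hbound : ∀ q : ℕ, Even q → 2 ≤ q → f q ≤ K * Psi q M (σ ^ 2)) :
    ∀ p : ℝ, 2 ≤ p → f p ≤ 2 * K * Psi p M (σ ^ 2) := by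
  intro p hp
  obtain ⟨q, hq_even, hq, hqp, hpq⟩ := exists_even_le_le_two_mul hp
  have hq' : (2 : ℝ) ≤ q := by exact_mod_cast hq
  have hV : 0 < σ ^ 2 := by positivity
  have hlog_bound : ∀ r : ℕ, Even r → 2 ≤ r →
      log (f r) ≤ log K + log (Psi r M (σ ^ 2)) := fun r hr hr2 => by
    rw [← log_mul hK.ne' (Psi_pos hM hV (by exact_mod_cast hr2)).ne']
    exact log_le_log (hpos r (by exact_mod_cast hr2)) (hbound r hr hr2)
  have hfq := hlog_bound q hq_even hq
  have hf2q := hlog_bound (2 * q) (even_two_mul q) (by omega)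
  push_cast at hf2q
  obtain ⟨hθ₀, hθ₁, -⟩ := interpolation_weights (by linarith) hqp hpq
  have hinterp := log_le_interpolation_of_convexOn hconv hq' hqp hpq
  have hΨ := log_Psi_le_interpolation hM hV hq' hqp hpq
  have hΨp := Psi_pos hM hV hp
  rw [← log_le_log_iff (hpos p hp) (by positivity), log_mul (by positivity) hΨp.ne',
    log_mul two_ne_zero hK.ne']
  linarith [mul_le_mul_of_nonneg_left hfq hθ₀, mul_le_mul_of_nonneg_left hf2q hθ₁]

theorem psi_integers_to_reals (f : ℝ → ℝ)
    (hpos : ∀ p : ℝ, 2 ≤ p → 0 < f p)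
    (hmono : MonotoneOn f (Set.Ici (2 : ℝ)))
    (hconv : ConvexOn ℝ (Set.Ioc (0 : ℝ) (1 / 2)) (fun t => Real.log (f t⁻¹)))
    (K M σ : ℝ) (hK : 0 < K) (hM : 0 < M) (hσ : 0 < σ)
    (hbound : ∀ q : ℕ, Even q → 2 ≤ q → f q ≤ K * Psi q M (σ ^ 2)) :
    ∀ p : ℝ, 2 ≤ p → f p ≤ 2 * K * Psi p M (σ ^ 2) :=
  psi_integers_to_reals_general f hpos hconv K M σ hK hM hσ hbound
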